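/- The forgetful functor U : Exp → ωCat, from the category of strict ω-categories endowed with an expansion to the category of strict ω-categories, admits a left adjoint. -/

import Mathlib

/-! Formalization of notions from "Orientals as free algebras" (Ara–Lafont–Métayer),
following Burroni's expansion monad construction. Strict ω-categories are encoded
as a single set of cells with a dimension function, together with (total) source,
target, composition and unit operations, whose axioms are required to hold on the
appropriate domains of definition. -/

noncomputable section

namespace Orientals

open CategoryTheory

universe u v w

/-- The underlying data of a strict ω-category. `comp p x y` denotes the
`p`-composition `x ∘_p y` ("x after y"), meaningful when `p < dim x = dim y`
and the iterated `p`-source of `x` equals the iterated `p`-target of `y`. -/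
structure PreOmegaCat : Type (u + 1) where
  Cell : Type u
  dim : Cell → ℕ
  src : Cell → Cell
  tgt : Cell → Cell
  comp : ℕ → Cell → Cell → Cell
  unit : Cell → Cell

namespace PreOmegaCat

variable (C : PreOmegaCat.{u})

/-- Iterated source, down to dimension `p`. -/
def srcI (p : ℕ) (x : C.Cell) : C.Cell := C.src^[C.dim x - p] x

/-- Iterated target, down to dimension `p`. -/
def tgtI (p : ℕ) (x : C.Cell) : C.Cell := C.tgt^[C.dim x - p] x

/-- `x ∘_p y` is defined when `p < dim x = dim y` and `s_p x = t_p y`. -/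
abbrev Composable (p : ℕ) (x y : C.Cell) : Prop :=
  p < C.dim x ∧ C.dim y = C.dim x ∧ C.srcI p x = C.tgtI p y

/-- Pad a cell with iterated units up to dimension `m`. -/
def pad (m : ℕ) (x : C.Cell) : C.Cell := C.unit^[m - C.dim x] x

/-- Composition of two cells of possibly different dimensions, the lower
dimensional one being padded with units (the abbreviation `x ∘_q u` of the paper). -/
def mcomp (p : ℕ) (x y : C.Cell) : C.Cell :=
  C.comp p (C.pad (max (C.dim x) (C.dim y)) x) (C.pad (max (C.dim x) (C.dim y)) y)

end PreOmegaCat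

namespace PreOmegaCat

/-- `foldComp b s k = b ∘_0 s 0 ∘_1 s 1 ∘_2 ⋯ ∘_{k-1} s (k-1)`, parenthesized
with priority to the lowest dimensional compositions (i.e. left-nested). -/
def foldComp (C : PreOmegaCat.{u}) (b : C.Cell) (s : ℕ → C.Cell) : ℕ → C.Cell
  | 0 => b
  | k + 1 => C.mcomp k (foldComp C b s k) (s k)

end PreOmegaCat

/-- A strict ω-category: the data of a `PreOmegaCat` satisfying the globularity,
associativity, unit, interchange and functoriality-of-units laws on their domains
of definition. By convention, source and target fix the `0`-cells. -/
structure OmegaCat extends PreOmegaCat.{u} : Type (u + 1) where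
  dim_src : ∀ x, dim x ≠ 0 → dim (src x) = dim x - 1
  dim_tgt : ∀ x, dim x ≠ 0 → dim (tgt x) = dim x - 1
  src_dim0 : ∀ x, dim x = 0 → src x = x
  tgt_dim0 : ∀ x, dim x = 0 → tgt x = x
  glob_ss : ∀ x, 2 ≤ dim x → src (src x) = src (tgt x)
  glob_tt : ∀ x, 2 ≤ dim x → tgt (src x) = tgt (tgt x)
  dim_unit : ∀ x, dim (unit x) = dim x + 1
  src_unit : ∀ x, src (unit x) = x
  tgt_unit : ∀ x, tgt (unit x) = x
  dim_comp : ∀ p x y, toPreOmegaCat.Composable p x y → dim (comp p x y) = dim x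
  src_comp_top : ∀ p x y, toPreOmegaCat.Composable p x y → dim x = p + 1 →
    src (comp p x y) = src y
  tgt_comp_top : ∀ p x y, toPreOmegaCat.Composable p x y → dim x = p + 1 →
    tgt (comp p x y) = tgt x
  src_comp : ∀ p x y, toPreOmegaCat.Composable p x y → p + 1 < dim x →
    src (comp p x y) = comp p (src x) (src y)
  tgt_comp : ∀ p x y, toPreOmegaCat.Composable p x y → p + 1 < dim x →
    tgt (comp p x y) = comp p (tgt x) (tgt y)
  comp_assoc : ∀ p x y z, toPreOmegaCat.Composable p x y →
    toPreOmegaCat.Composable p y z →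
    comp p (comp p x y) z = comp p x (comp p y z)
  comp_unit_src : ∀ p x, p < dim x →
    comp p x (unit^[dim x - p] (toPreOmegaCat.srcI p x)) = x
  comp_unit_tgt : ∀ p x, p < dim x →
    comp p (unit^[dim x - p] (toPreOmegaCat.tgtI p x)) x = x
  interchange : ∀ p q x y x' y', q < p →
    toPreOmegaCat.Composable p x y → toPreOmegaCat.Composable p x' y' →
    toPreOmegaCat.Composable q x x' → toPreOmegaCat.Composable q y y' →
    comp q (comp p x y) (comp p x' y') = comp p (comp q x x') (comp q y y')
  unit_comp : ∀ p x y, toPreOmegaCat.Composable p x y →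
    unit (comp p x y) = comp p (unit x) (unit y)

/-- A (strict) ω-functor: a map of cells preserving dimension, sources, targets,
the defined compositions, and units. -/
@[ext]
structure OmegaFunctor (C D : OmegaCat.{u}) : Type u where
  map : C.Cell → D.Cell
  map_dim : ∀ x, D.dim (map x) = C.dim x
  map_src : ∀ x, map (C.src x) = D.src (map x)
  map_tgt : ∀ x, map (C.tgt x) = D.tgt (map x)
  map_comp : ∀ p x y, C.Composable p x y →
    map (C.comp p x y) = D.comp p (map x) (map y)
  map_unit : ∀ x, map (C.unit x) = D.unit (map x)

namespace OmegaFunctor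

/-- The identity ω-functor. -/
def idF (C : OmegaCat.{u}) : OmegaFunctor C C where
  map := _root_.id
  map_dim _ := rfl
  map_src _ := rfl
  map_tgt _ := rfl
  map_comp _ _ _ _ := rfl
  map_unit _ := rfl

theorem map_srcI {C D : OmegaCat.{u}} (f : OmegaFunctor C D) (p : ℕ) (x : C.Cell) :
    f.map (C.srcI p x) = D.srcI p (f.map x) := by
  show f.map (C.src^[C.dim x - p] x) = D.src^[D.dim (f.map x) - p] (f.map x)
  rw [f.map_dim]
  exact Function.Semiconj.iterate_right f.map_src (C.dim x - p) x

theorem map_tgtI {C D : OmegaCat.{u}} (f : OmegaFunctor C D) (p : ℕ) (x : C.Cell) :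
    f.map (C.tgtI p x) = D.tgtI p (f.map x) := by
  show f.map (C.tgt^[C.dim x - p] x) = D.tgt^[D.dim (f.map x) - p] (f.map x)
  rw [f.map_dim]
  exact Function.Semiconj.iterate_right f.map_tgt (C.dim x - p) x

theorem map_composable {C D : OmegaCat.{u}} (f : OmegaFunctor C D) {p : ℕ}
    {x y : C.Cell} (h : C.Composable p x y) : D.Composable p (f.map x) (f.map y) := by
  obtain ⟨h1, h2, h3⟩ := h
  refine ⟨?_, ?_, ?_⟩
  · rw [f.map_dim]; exact h1
  · rw [f.map_dim, f.map_dim]; exact h2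
  · rw [← f.map_srcI, ← f.map_tgtI, h3]

/-- Composition of ω-functors. -/
def compF {C D E : OmegaCat.{u}} (f : OmegaFunctor C D) (g : OmegaFunctor D E) :
    OmegaFunctor C E where
  map x := g.map (f.map x)
  map_dim x := by rw [g.map_dim, f.map_dim]
  map_src x := by rw [f.map_src, g.map_src]
  map_tgt x := by rw [f.map_tgt, g.map_tgt]
  map_comp p x y h := by
    rw [f.map_comp p x y h, g.map_comp p _ _ (f.map_composable h)]
  map_unit x := by rw [f.map_unit, g.map_unit]

end OmegaFunctor

/-- The category `ωCat` of strict ω-categories and strict ω-functors. -/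
instance : Category.{u, u + 1} OmegaCat.{u} where
  Hom := OmegaFunctor
  id := OmegaFunctor.idF
  comp := OmegaFunctor.compF
  id_comp f := by apply OmegaFunctor.ext; rfl
  comp_id f := by apply OmegaFunctor.ext; rfl
  assoc f g h := by apply OmegaFunctor.ext; rfl

/-- The underlying cell map of a morphism in `ωCat`. -/
def homMap {C D : OmegaCat.{u}} (f : C ⟶ D) : C.Cell → D.Cell := OmegaFunctor.map f

/-- The empty (initial) ω-category. -/
def emptyOmega : OmegaCat.{u} where
  Cell := PEmpty
  dim x := x.elim
  src x := x.elim
  tgt x := x.elim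
  comp _ x _ := x.elim
  unit x := x.elim
  dim_src x := x.elim
  dim_tgt x := x.elim
  src_dim0 x := x.elim
  tgt_dim0 x := x.elim
  glob_ss x := x.elim
  glob_tt x := x.elim
  dim_unit x := x.elim
  src_unit x := x.elim
  tgt_unit x := x.elim
  dim_comp _ x := x.elim
  src_comp_top _ x := x.elim
  tgt_comp_top _ x := x.elim
  src_comp _ x := x.elim
  tgt_comp _ x := x.elim
  comp_assoc _ x := x.elim
  comp_unit_src _ x := x.elim
  comp_unit_tgt _ x := x.elim
  interchange _ _ x := x.elim
  unit_comp _ x := x.elim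

/-- An expansion on an ω-category `C`: an origin `orig` (a `0`-cell) together
with, for each `n`-cell `x`, an `(n+1)`-cell `xi x` (written `ξ_x` in the paper)
with `ξ_x : orig → x` for `n = 0` and
`ξ_x : ξ_{t x_{n-1}} → x ∘_0 ξ_{s x_0} ∘_1 ⋯ ∘_{n-1} ξ_{s x_{n-1}}` for `n > 0`,
compatible with compositions and units, and degenerate on `orig` and on the
cells `ξ_u`. -/
structure Expansion (C : OmegaCat.{u}) : Type u where
  orig : C.Cell
  dim_orig : C.dim orig = 0
  xi : C.Cell → C.Cell
  dim_xi : ∀ x, C.dim (xi x) = C.dim x + 1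
  xi_src0 : ∀ x, C.dim x = 0 → C.src (xi x) = orig
  xi_src : ∀ x, C.dim x ≠ 0 → C.src (xi x) = xi (C.tgt x)
  xi_tgt : ∀ x, C.tgt (xi x) = C.foldComp x (fun i => xi (C.srcI i x)) (C.dim x)
  xi_comp : ∀ p x y, C.Composable p y x →
    xi (C.comp p y x) =
      C.mcomp (p + 1)
        (C.mcomp p (C.foldComp (C.tgtI (p + 1) y) (fun i => xi (C.srcI i x)) p) (xi x))
        (xi y)
  xi_unit : ∀ u, xi (C.unit u) = C.unit (xi u)
  xi_xi : ∀ u, xi (xi u) = C.unit (xi u)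
  xi_orig : xi orig = C.unit orig

/-- An object of the category `Exp`: an ω-category endowed with an expansion. -/
structure ExpCatObj : Type (u + 1) where
  cat : OmegaCat.{u}
  exp : Expansion cat

/-- A morphism of ω-categories with expansion: an ω-functor preserving the
origin and commuting with the expansions. -/
@[ext]
structure ExpHom (X Y : ExpCatObj.{u}) : Type u where
  func : OmegaFunctor X.cat Y.cat
  map_orig : func.map X.exp.orig = Y.exp.orig
  map_xi : ∀ x, func.map (X.exp.xi x) = Y.exp.xi (func.map x)

/-- The category `Exp` of ω-categories endowed with an expansion. -/
instance : Category.{u, u + 1} ExpCatObj.{u} where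
  Hom := ExpHom
  id X := ⟨OmegaFunctor.idF X.cat, rfl, fun _ => rfl⟩
  comp {X Y Z} f g :=
    ⟨OmegaFunctor.compF f.func g.func,
      by show g.func.map (f.func.map _) = _; rw [f.map_orig, g.map_orig],
      fun x => by show g.func.map (f.func.map _) = _; rw [f.map_xi, g.map_xi]; rfl⟩
  id_comp f := by apply ExpHom.ext; apply OmegaFunctor.ext; rfl
  comp_id f := by apply ExpHom.ext; apply OmegaFunctor.ext; rfl
  assoc f g h := by apply ExpHom.ext; apply OmegaFunctor.ext; rfl

/-- The forgetful functor `U : Exp → ωCat`. -/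
def forgetExp : ExpCatObj.{u} ⥤ OmegaCat.{u} where
  obj X := X.cat
  map f := f.func
  map_id _ := rfl
  map_comp _ _ := rfl

/-- The underlying ω-functor with expansion of a morphism in `Exp`. -/
def expHomOf {X Y : ExpCatObj.{u}} (f : X ⟶ Y) : ExpHom X Y := f

/-!
By the general adjoint functor theorem it suffices that `Exp` has small limits preserved by
`U` and that `U` satisfies the solution set condition. Both rest on one transfer principle: if
the cells of a candidate structure map into a family of ω-categories (with expansion) by maps
that preserve the operations (composites at least when the images are composable) and are
jointly injective on cells of equal dimension, then the candidate satisfies the laws.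

Limits are computed as in `ωCat`, by compatible families of cells with componentwise
operations. The subtle point is the expansion: the right-hand sides of its axioms are iterated
padded composites `c ∘_0 ξ_{s_0 x} ∘_1 ⋯`, which can only be computed componentwise once one
knows that they are genuine composites in every ω-category with expansion; this follows by
induction from the axiom describing the target of `ξ`.

For the solution set, a functor `f : C → U X` factors through the substructure of `X`
generated by its image. That substructure is a quotient of the type of terms over the cells of
`C`, determined by the kernel of evaluation and the dimensions of the terms, so up to
isomorphism there is only a set of them.
-/

namespace PreOmegaCat

variable (P : PreOmegaCat.{u})

theorem dim_iterate_of_sub_one {f : P.Cell → P.Cell} (hf : ∀ x, P.dim (f x) = P.dim x - 1)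
    (k : ℕ) (x : P.Cell) : P.dim (f^[k] x) = P.dim x - k := by
  induction k with
  | zero => rfl
  | succ k ih => rw [Function.iterate_succ_apply', hf, ih, Nat.sub_sub]

theorem dim_srcI_of (hs : ∀ x, P.dim (P.src x) = P.dim x - 1) {p : ℕ} {x : P.Cell}
    (h : p ≤ P.dim x) : P.dim (P.srcI p x) = p := by
  rw [srcI, P.dim_iterate_of_sub_one hs]; omega

theorem dim_tgtI_of (ht : ∀ x, P.dim (P.tgt x) = P.dim x - 1) {p : ℕ} {x : P.Cell}
    (h : p ≤ P.dim x) : P.dim (P.tgtI p x) = p := by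
  rw [tgtI, P.dim_iterate_of_sub_one ht]; omega

theorem dim_unit_iterate_of (hu : ∀ x, P.dim (P.unit x) = P.dim x + 1) (k : ℕ) (x : P.Cell) :
    P.dim (P.unit^[k] x) = P.dim x + k := by
  induction k with
  | zero => rfl
  | succ k ih => rw [Function.iterate_succ_apply', hu, ih, Nat.add_assoc]

theorem pad_of_le {m : ℕ} {x : P.Cell} (h : m ≤ P.dim x) : P.pad m x = x := by
  rw [pad, Nat.sub_eq_zero_of_le h, Function.iterate_zero_apply]

def MComposable (p : ℕ) (x y : P.Cell) : Prop :=
  P.Composable p (P.pad (max (P.dim x) (P.dim y)) x) (P.pad (max (P.dim x) (P.dim y)) y)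

end PreOmegaCat

namespace OmegaCat

open PreOmegaCat (srcI tgtI pad mcomp foldComp MComposable)

variable (C : OmegaCat.{u})

theorem dim_src_eq (x : C.Cell) : C.dim (C.src x) = C.dim x - 1 := by
  by_cases h : C.dim x = 0
  · rw [C.src_dim0 x h, h]
  · exact C.dim_src x h

theorem dim_tgt_eq (x : C.Cell) : C.dim (C.tgt x) = C.dim x - 1 := by
  by_cases h : C.dim x = 0
  · rw [C.tgt_dim0 x h, h]
  · exact C.dim_tgt x h

theorem dim_src_iterate (k : ℕ) (x : C.Cell) : C.dim (C.src^[k] x) = C.dim x - k :=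
  C.dim_iterate_of_sub_one C.dim_src_eq k x

theorem dim_tgt_iterate (k : ℕ) (x : C.Cell) : C.dim (C.tgt^[k] x) = C.dim x - k :=
  C.dim_iterate_of_sub_one C.dim_tgt_eq k x

theorem dim_srcI {p : ℕ} {x : C.Cell} (h : p ≤ C.dim x) : C.dim (C.srcI p x) = p :=
  C.dim_srcI_of C.dim_src_eq h

theorem dim_tgtI {p : ℕ} {x : C.Cell} (h : p ≤ C.dim x) : C.dim (C.tgtI p x) = p :=
  C.dim_tgtI_of C.dim_tgt_eq h

theorem dim_unit_iterate (k : ℕ) (x : C.Cell) : C.dim (C.unit^[k] x) = C.dim x + k :=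
  C.dim_unit_iterate_of C.dim_unit k x

theorem dim_pad (m : ℕ) (x : C.Cell) : C.dim (C.pad m x) = max m (C.dim x) := by
  rw [pad, dim_unit_iterate]; omega

theorem srcI_of_le {p : ℕ} {x : C.Cell} (h : C.dim x ≤ p) : C.srcI p x = x := by
  rw [srcI, Nat.sub_eq_zero_of_le h, Function.iterate_zero_apply]

theorem tgtI_of_le {p : ℕ} {x : C.Cell} (h : C.dim x ≤ p) : C.tgtI p x = x := by
  rw [tgtI, Nat.sub_eq_zero_of_le h, Function.iterate_zero_apply]

theorem srcI_srcI {p q : ℕ} (h : q ≤ p) (x : C.Cell) :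
    C.srcI q (C.srcI p x) = C.srcI q x := by
  rw [srcI, srcI, srcI, dim_src_iterate, ← Function.iterate_add_apply]
  congr 1; omega

theorem tgtI_tgtI {p q : ℕ} (h : q ≤ p) (x : C.Cell) :
    C.tgtI q (C.tgtI p x) = C.tgtI q x := by
  rw [tgtI, tgtI, tgtI, dim_tgt_iterate, ← Function.iterate_add_apply]
  congr 1; omega

theorem src_iterate_tgt_iterate {k : ℕ} (hk : 1 ≤ k) (j : ℕ) {x : C.Cell}
    (hkj : k + j ≤ C.dim x) : C.src^[k] (C.tgt^[j] x) = C.src^[k + j] x := by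
  induction j generalizing k with
  | zero => rfl
  | succ j ih =>
    obtain ⟨k, rfl⟩ := Nat.exists_eq_add_of_le' hk
    have h2 : 2 ≤ C.dim (C.tgt^[j] x) := by rw [dim_tgt_iterate]; omega
    rw [Function.iterate_succ_apply' C.tgt, Function.iterate_succ_apply C.src,
      ← C.glob_ss _ h2, ← Function.iterate_succ_apply C.src,
      ← Function.iterate_succ_apply C.src, ih (by omega) (by omega)]
    congr 1; omega

theorem tgt_iterate_src_iterate {k : ℕ} (hk : 1 ≤ k) (j : ℕ) {x : C.Cell}
    (hkj : k + j ≤ C.dim x) : C.tgt^[k] (C.src^[j] x) = C.tgt^[k + j] x := by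
  induction j generalizing k with
  | zero => rfl
  | succ j ih =>
    obtain ⟨k, rfl⟩ := Nat.exists_eq_add_of_le' hk
    have h2 : 2 ≤ C.dim (C.src^[j] x) := by rw [dim_src_iterate]; omega
    rw [Function.iterate_succ_apply' C.src, Function.iterate_succ_apply C.tgt,
      C.glob_tt _ h2, ← Function.iterate_succ_apply C.tgt,
      ← Function.iterate_succ_apply C.tgt, ih (by omega) (by omega)]
    congr 1; omega

theorem srcI_tgtI {p q : ℕ} (h : q < p) (x : C.Cell) :
    C.srcI q (C.tgtI p x) = C.srcI q x := by
  rcases le_or_gt (C.dim x) p with hp | hp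
  · rw [C.tgtI_of_le hp]
  · rw [srcI, C.dim_tgtI hp.le, tgtI, C.src_iterate_tgt_iterate (by omega) _ (by omega), srcI]
    congr 1; omega

theorem tgtI_srcI {p q : ℕ} (h : q < p) (x : C.Cell) :
    C.tgtI q (C.srcI p x) = C.tgtI q x := by
  rcases le_or_gt (C.dim x) p with hp | hp
  · rw [C.srcI_of_le hp]
  · rw [tgtI, C.dim_srcI hp.le, srcI, C.tgt_iterate_src_iterate (by omega) _ (by omega), tgtI]
    congr 1; omega

theorem src_srcI_succ {p : ℕ} {x : C.Cell} (h : p < C.dim x) :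
    C.src (C.srcI (p + 1) x) = C.srcI p x := by
  rw [srcI, srcI, ← Function.iterate_succ_apply' C.src]
  congr 1; omega

theorem tgt_tgtI_succ {p : ℕ} {x : C.Cell} (h : p < C.dim x) :
    C.tgt (C.tgtI (p + 1) x) = C.tgtI p x := by
  rw [tgtI, tgtI, ← Function.iterate_succ_apply' C.tgt]
  congr 1; omega

theorem srcI_src {p : ℕ} {x : C.Cell} (h : p < C.dim x) : C.srcI p (C.src x) = C.srcI p x := by
  rw [srcI, srcI, dim_src_eq, ← Function.iterate_succ_apply C.src]
  congr 1; omega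

theorem tgtI_tgt {p : ℕ} {x : C.Cell} (h : p < C.dim x) : C.tgtI p (C.tgt x) = C.tgtI p x := by
  rw [tgtI, tgtI, dim_tgt_eq, ← Function.iterate_succ_apply C.tgt]
  congr 1; omega

theorem tgtI_src {p : ℕ} {x : C.Cell} (h : p + 1 < C.dim x) :
    C.tgtI p (C.src x) = C.tgtI p x := by
  have := C.tgtI_srcI (show p < C.dim x - 1 by omega) x
  rwa [srcI, show C.dim x - (C.dim x - 1) = 1 by omega, Function.iterate_one] at this

theorem srcI_tgt {p : ℕ} {x : C.Cell} (h : p + 1 < C.dim x) :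
    C.srcI p (C.tgt x) = C.srcI p x := by
  have := C.srcI_tgtI (show p < C.dim x - 1 by omega) x
  rwa [tgtI, show C.dim x - (C.dim x - 1) = 1 by omega, Function.iterate_one] at this

theorem src_iterate_unit_iterate (k : ℕ) (x : C.Cell) : C.src^[k] (C.unit^[k] x) = x := by
  induction k with
  | zero => rfl
  | succ k ih => rw [Function.iterate_succ_apply, Function.iterate_succ_apply' C.unit,
      C.src_unit, ih]

theorem tgt_iterate_unit_iterate (k : ℕ) (x : C.Cell) : C.tgt^[k] (C.unit^[k] x) = x := by
  induction k with
  | zero => rfl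
  | succ k ih => rw [Function.iterate_succ_apply, Function.iterate_succ_apply' C.unit,
      C.tgt_unit, ih]

theorem srcI_unit_iterate {p : ℕ} (k : ℕ) {x : C.Cell} (h : p ≤ C.dim x) :
    C.srcI p (C.unit^[k] x) = C.srcI p x := by
  rw [srcI, srcI, dim_unit_iterate, show C.dim x + k - p = C.dim x - p + k by omega,
    Function.iterate_add_apply, src_iterate_unit_iterate]

theorem tgtI_unit_iterate {p : ℕ} (k : ℕ) {x : C.Cell} (h : p ≤ C.dim x) :
    C.tgtI p (C.unit^[k] x) = C.tgtI p x := by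
  rw [tgtI, tgtI, dim_unit_iterate, show C.dim x + k - p = C.dim x - p + k by omega,
    Function.iterate_add_apply, tgt_iterate_unit_iterate]

theorem srcI_unit_iterate_of_le {p k : ℕ} {x : C.Cell} (h₁ : C.dim x ≤ p)
    (h₂ : p ≤ C.dim x + k) : C.srcI p (C.unit^[k] x) = C.unit^[p - C.dim x] x := by
  rw [srcI, dim_unit_iterate, show k = C.dim x + k - p + (p - C.dim x) by omega,
    Function.iterate_add_apply, show C.dim x + (C.dim x + k - p + (p - C.dim x)) - p =
      C.dim x + k - p by omega, src_iterate_unit_iterate]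

theorem tgtI_unit_iterate_of_le {p k : ℕ} {x : C.Cell} (h₁ : C.dim x ≤ p)
    (h₂ : p ≤ C.dim x + k) : C.tgtI p (C.unit^[k] x) = C.unit^[p - C.dim x] x := by
  rw [tgtI, dim_unit_iterate, show k = C.dim x + k - p + (p - C.dim x) by omega,
    Function.iterate_add_apply, show C.dim x + (C.dim x + k - p + (p - C.dim x)) - p =
      C.dim x + k - p by omega, tgt_iterate_unit_iterate]

theorem composable_src {p : ℕ} {x y : C.Cell} (hc : C.Composable p x y)
    (h : p + 1 < C.dim x) : C.Composable p (C.src x) (C.src y) := by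
  obtain ⟨h₁, h₂, h₃⟩ := hc
  refine ⟨by rw [dim_src_eq]; omega, by rw [dim_src_eq, dim_src_eq, h₂], ?_⟩
  rw [C.srcI_src h₁, C.tgtI_src (by omega), h₃]

theorem composable_tgt {p : ℕ} {x y : C.Cell} (hc : C.Composable p x y)
    (h : p + 1 < C.dim x) : C.Composable p (C.tgt x) (C.tgt y) := by
  obtain ⟨h₁, h₂, h₃⟩ := hc
  refine ⟨by rw [dim_tgt_eq]; omega, by rw [dim_tgt_eq, dim_tgt_eq, h₂], ?_⟩
  rw [C.srcI_tgt (by omega), C.tgtI_tgt (by omega), h₃]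

theorem composable_src_iterate {p : ℕ} {x y : C.Cell} (hc : C.Composable p x y) (k : ℕ)
    (hk : p + 1 + k ≤ C.dim x) : C.Composable p (C.src^[k] x) (C.src^[k] y) := by
  induction k with
  | zero => exact hc
  | succ k ih =>
    rw [Function.iterate_succ_apply', Function.iterate_succ_apply']
    exact C.composable_src (ih (by omega)) (by rw [dim_src_iterate]; omega)

theorem composable_tgt_iterate {p : ℕ} {x y : C.Cell} (hc : C.Composable p x y) (k : ℕ)
    (hk : p + 1 + k ≤ C.dim x) : C.Composable p (C.tgt^[k] x) (C.tgt^[k] y) := by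
  induction k with
  | zero => exact hc
  | succ k ih =>
    rw [Function.iterate_succ_apply', Function.iterate_succ_apply']
    exact C.composable_tgt (ih (by omega)) (by rw [dim_tgt_iterate]; omega)

theorem src_iterate_comp {p : ℕ} {x y : C.Cell} (hc : C.Composable p x y) (k : ℕ)
    (hk : p + 1 + k ≤ C.dim x) :
    C.src^[k] (C.comp p x y) = C.comp p (C.src^[k] x) (C.src^[k] y) := by
  induction k with
  | zero => rfl
  | succ k ih =>
    rw [Function.iterate_succ_apply', ih (by omega),
      C.src_comp _ _ _ (C.composable_src_iterate hc k (by omega))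
        (by rw [dim_src_iterate]; omega),
      ← Function.iterate_succ_apply' C.src, ← Function.iterate_succ_apply' C.src]

theorem tgt_iterate_comp {p : ℕ} {x y : C.Cell} (hc : C.Composable p x y) (k : ℕ)
    (hk : p + 1 + k ≤ C.dim x) :
    C.tgt^[k] (C.comp p x y) = C.comp p (C.tgt^[k] x) (C.tgt^[k] y) := by
  induction k with
  | zero => rfl
  | succ k ih =>
    rw [Function.iterate_succ_apply', ih (by omega),
      C.tgt_comp _ _ _ (C.composable_tgt_iterate hc k (by omega))
        (by rw [dim_tgt_iterate]; omega),
      ← Function.iterate_succ_apply' C.tgt, ← Function.iterate_succ_apply' C.tgt]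

theorem composable_srcI {p q : ℕ} {x y : C.Cell} (hc : C.Composable p x y) (hq : p < q)
    (hqx : q ≤ C.dim x) : C.Composable p (C.srcI q x) (C.srcI q y) := by
  rw [srcI, srcI, hc.2.1]
  exact C.composable_src_iterate hc _ (by omega)

theorem composable_tgtI {p q : ℕ} {x y : C.Cell} (hc : C.Composable p x y) (hq : p < q)
    (hqx : q ≤ C.dim x) : C.Composable p (C.tgtI q x) (C.tgtI q y) := by
  rw [tgtI, tgtI, hc.2.1]
  exact C.composable_tgt_iterate hc _ (by omega)

theorem srcI_comp_of_lt {p q : ℕ} {x y : C.Cell} (hc : C.Composable p x y) (hq : p < q)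
    (hqx : q ≤ C.dim x) : C.srcI q (C.comp p x y) = C.comp p (C.srcI q x) (C.srcI q y) := by
  rw [srcI, srcI, srcI, C.dim_comp p x y hc, hc.2.1]
  exact C.src_iterate_comp hc _ (by omega)

theorem tgtI_comp_of_lt {p q : ℕ} {x y : C.Cell} (hc : C.Composable p x y) (hq : p < q)
    (hqx : q ≤ C.dim x) : C.tgtI q (C.comp p x y) = C.comp p (C.tgtI q x) (C.tgtI q y) := by
  rw [tgtI, tgtI, tgtI, C.dim_comp p x y hc, hc.2.1]
  exact C.tgt_iterate_comp hc _ (by omega)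

theorem srcI_comp_of_le {p q : ℕ} {x y : C.Cell} (hc : C.Composable p x y) (hq : q ≤ p) :
    C.srcI q (C.comp p x y) = C.srcI q y := by
  have hd := C.dim_comp p x y hc
  have hy := hc.2.1
  have hc' := C.composable_srcI hc (Nat.lt_succ_self p) hc.1
  rw [← C.srcI_srcI hq, ← C.src_srcI_succ (x := C.comp p x y) (by omega),
    C.srcI_comp_of_lt hc p.lt_succ_self hc.1, C.src_comp_top _ _ _ hc' (C.dim_srcI hc.1),
    C.src_srcI_succ (by omega), C.srcI_srcI hq]

theorem tgtI_comp_of_le {p q : ℕ} {x y : C.Cell} (hc : C.Composable p x y) (hq : q ≤ p) :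
    C.tgtI q (C.comp p x y) = C.tgtI q x := by
  have hd := C.dim_comp p x y hc
  have hy := hc.2.1
  have hc' := C.composable_tgtI hc (Nat.lt_succ_self p) hc.1
  rw [← C.tgtI_tgtI hq, ← C.tgt_tgtI_succ (x := C.comp p x y) (by omega),
    C.tgtI_comp_of_lt hc p.lt_succ_self hc.1, C.tgt_comp_top _ _ _ hc' (C.dim_tgtI hc.1),
    C.tgt_tgtI_succ hc.1, C.tgtI_tgtI hq]

section Composable

variable {p q : ℕ} {x y z x' y' : C.Cell}

theorem composable_comp_left (h₁ : C.Composable p x y) (h₂ : C.Composable p y z) :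
    C.Composable p (C.comp p x y) z :=
  ⟨by rw [C.dim_comp _ _ _ h₁]; exact h₁.1, by rw [C.dim_comp _ _ _ h₁, h₂.2.1, h₁.2.1],
    by rw [C.srcI_comp_of_le h₁ le_rfl, h₂.2.2]⟩

theorem composable_comp_right (h₁ : C.Composable p x y) (h₂ : C.Composable p y z) :
    C.Composable p x (C.comp p y z) :=
  ⟨h₁.1, by rw [C.dim_comp _ _ _ h₂, h₁.2.1],
    by rw [C.tgtI_comp_of_le h₂ le_rfl, h₁.2.2]⟩

theorem composable_comp_comp_of_lt (hqp : q < p) (h₁ : C.Composable p x y)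
    (h₂ : C.Composable p x' y') (h₃ : C.Composable q x x') :
    C.Composable q (C.comp p x y) (C.comp p x' y') := by
  refine ⟨by rw [C.dim_comp _ _ _ h₁]; exact h₃.1,
    by rw [C.dim_comp _ _ _ h₁, C.dim_comp _ _ _ h₂, h₃.2.1], ?_⟩
  rw [C.srcI_comp_of_le h₁ hqp.le, C.tgtI_comp_of_le h₂ hqp.le, ← C.srcI_tgtI hqp,
    ← h₁.2.2, C.srcI_srcI hqp.le, h₃.2.2]

theorem composable_comp_comp_of_gt (hqp : q < p) (h₁ : C.Composable p x y)
    (h₂ : C.Composable p x' y') (h₃ : C.Composable q x x') (h₄ : C.Composable q y y') :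
    C.Composable p (C.comp q x x') (C.comp q y y') := by
  refine ⟨by rw [C.dim_comp _ _ _ h₃]; exact h₁.1,
    by rw [C.dim_comp _ _ _ h₃, C.dim_comp _ _ _ h₄, h₁.2.1], ?_⟩
  rw [C.srcI_comp_of_lt h₃ hqp h₁.1.le,
    C.tgtI_comp_of_lt h₄ hqp (by rw [h₁.2.1]; exact h₁.1.le), h₁.2.2, h₂.2.2]

theorem composable_unit (h : C.Composable p x y) : C.Composable p (C.unit x) (C.unit y) := by
  refine ⟨by rw [C.dim_unit]; exact h.1.trans (Nat.lt_succ_self _),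
    by rw [C.dim_unit, C.dim_unit, h.2.1], ?_⟩
  have hx := C.srcI_unit_iterate 1 h.1.le
  have hy := C.tgtI_unit_iterate 1 (h.2.1 ▸ h.1.le : p ≤ C.dim y)
  rw [Function.iterate_one] at hx hy
  rw [hx, hy, h.2.2]

theorem composable_unit_iterate_srcI (hp : p < C.dim x) :
    C.Composable p x (C.unit^[C.dim x - p] (C.srcI p x)) := by
  refine ⟨hp, by rw [dim_unit_iterate, C.dim_srcI hp.le]; omega, ?_⟩
  rw [C.tgtI_unit_iterate_of_le (C.dim_srcI hp.le).le (by rw [C.dim_srcI hp.le]; omega),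
    C.dim_srcI hp.le, Nat.sub_self, Function.iterate_zero_apply]

theorem composable_unit_iterate_tgtI (hp : p < C.dim x) :
    C.Composable p (C.unit^[C.dim x - p] (C.tgtI p x)) x := by
  refine ⟨by rw [dim_unit_iterate, C.dim_tgtI hp.le]; omega,
    by rw [dim_unit_iterate, C.dim_tgtI hp.le]; omega, ?_⟩
  rw [C.srcI_unit_iterate_of_le (C.dim_tgtI hp.le).le (by rw [C.dim_tgtI hp.le]; omega),
    C.dim_tgtI hp.le, Nat.sub_self, Function.iterate_zero_apply]

theorem srcI_eq_srcI_of_composable (hc : C.Composable p y x) {i : ℕ} (hi : i < p) :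
    C.srcI i y = C.srcI i x := by
  rw [← C.srcI_srcI hi.le, hc.2.2, C.srcI_tgtI hi]

end Composable

theorem dim_srcI_eq_min (q : ℕ) (x : C.Cell) : C.dim (C.srcI q x) = min q (C.dim x) := by
  rw [srcI, dim_src_iterate]; omega

theorem dim_tgtI_eq_min (q : ℕ) (x : C.Cell) : C.dim (C.tgtI q x) = min q (C.dim x) := by
  rw [tgtI, dim_tgt_iterate]; omega

theorem srcI_pad {q m : ℕ} (hq : q ≤ m) (x : C.Cell) :
    C.srcI q (C.pad m x) = C.pad q (C.srcI q x) := by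
  rcases le_or_gt q (C.dim x) with h | h
  · rw [pad, C.srcI_unit_iterate _ h, C.pad_of_le (C.dim_srcI h).ge]
  · rw [pad, C.srcI_unit_iterate_of_le h.le (by omega), C.srcI_of_le h.le, pad]

theorem tgtI_pad {q m : ℕ} (hq : q ≤ m) (x : C.Cell) :
    C.tgtI q (C.pad m x) = C.pad q (C.tgtI q x) := by
  rcases le_or_gt q (C.dim x) with h | h
  · rw [pad, C.tgtI_unit_iterate _ h, C.pad_of_le (C.dim_tgtI h).ge]
  · rw [pad, C.tgtI_unit_iterate_of_le h.le (by omega), C.tgtI_of_le h.le, pad]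

theorem dim_mcomp {p : ℕ} {x y : C.Cell} (h : C.MComposable p x y) :
    C.dim (C.mcomp p x y) = max (C.dim x) (C.dim y) := by
  rw [mcomp, C.dim_comp _ _ _ h, dim_pad]; omega

theorem mcomposable_of_srcI_eq_tgtI {p : ℕ} {x y : C.Cell} (hx : p < C.dim x)
    (hy : p < C.dim y) (h : C.srcI p x = C.tgtI p y) : C.MComposable p x y := by
  refine ⟨by rw [dim_pad]; omega, by rw [dim_pad, dim_pad]; omega, ?_⟩
  rw [pad, pad, C.srcI_unit_iterate _ hx.le, C.tgtI_unit_iterate _ hy.le, h]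

theorem srcI_mcomp {p q : ℕ} {x y : C.Cell} (h : C.MComposable p x y) (hpq : p < q)
    (hq : q ≤ max (C.dim x) (C.dim y)) :
    C.srcI q (C.mcomp p x y) = C.mcomp p (C.srcI q x) (C.srcI q y) := by
  rw [mcomp, C.srcI_comp_of_lt h hpq (by rw [dim_pad]; omega), C.srcI_pad hq, C.srcI_pad hq,
    mcomp, dim_srcI_eq_min, dim_srcI_eq_min,
    show max (min q (C.dim x)) (min q (C.dim y)) = q by omega]

theorem tgtI_mcomp {p q : ℕ} {x y : C.Cell} (h : C.MComposable p x y) (hpq : p < q)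
    (hq : q ≤ max (C.dim x) (C.dim y)) :
    C.tgtI q (C.mcomp p x y) = C.mcomp p (C.tgtI q x) (C.tgtI q y) := by
  rw [mcomp, C.tgtI_comp_of_lt h hpq (by rw [dim_pad]; omega), C.tgtI_pad hq, C.tgtI_pad hq,
    mcomp, dim_tgtI_eq_min, dim_tgtI_eq_min,
    show max (min q (C.dim x)) (min q (C.dim y)) = q by omega]

theorem tgtI_mcomp_of_le {p q : ℕ} {x y : C.Cell} (h : C.MComposable p x y) (hq : q ≤ p)
    (hx : q ≤ C.dim x) : C.tgtI q (C.mcomp p x y) = C.tgtI q x := by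
  rw [mcomp, C.tgtI_comp_of_le h hq, pad, C.tgtI_unit_iterate _ hx]

section Fold

variable {C} {b : C.Cell} {s : ℕ → C.Cell} {k : ℕ}

theorem foldComp_congr {s' : ℕ → C.Cell} (h : ∀ i < k, s i = s' i) :
    C.foldComp b s k = C.foldComp b s' k := by
  induction k with
  | zero => rfl
  | succ k ih => rw [foldComp, foldComp, ih fun i hi => h i (by omega), h k (by omega)]

theorem le_dim_foldComp (hs : ∀ i < k, C.MComposable i (C.foldComp b s i) (s i)) :
    C.dim b ≤ C.dim (C.foldComp b s k) := by
  induction k with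
  | zero => exact le_rfl
  | succ k ih =>
    rw [foldComp, C.dim_mcomp (hs k (by omega))]
    exact (ih fun i hi => hs i (by omega)).trans (le_max_left _ _)

theorem dim_foldComp (hs : ∀ i < k, C.MComposable i (C.foldComp b s i) (s i))
    (hsd : ∀ i < k, C.dim (s i) = i + 1) (hk : k ≤ C.dim b) :
    C.dim (C.foldComp b s k) = C.dim b := by
  induction k with
  | zero => rfl
  | succ k ih =>
    rw [foldComp, C.dim_mcomp (hs k (by omega)), ih (fun i hi => hs i (by omega))
      (fun i hi => hsd i (by omega)) (by omega), hsd k (by omega)]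
    omega

theorem srcI_foldComp (hs : ∀ i < k, C.MComposable i (C.foldComp b s i) (s i))
    (hsd : ∀ i < k, C.dim (s i) = i + 1) {q : ℕ} (hkq : k ≤ q) (hq : q ≤ C.dim b) :
    C.srcI q (C.foldComp b s k) = C.foldComp (C.srcI q b) s k := by
  induction k with
  | zero => rfl
  | succ k ih =>
    have hs' : ∀ i < k, C.MComposable i (C.foldComp b s i) (s i) := fun i hi => hs i (by omega)
    have hsd' : ∀ i < k, C.dim (s i) = i + 1 := fun i hi => hsd i (by omega)
    rw [foldComp, C.srcI_mcomp (hs k (by omega)) (by omega)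
      (by rw [dim_foldComp hs' hsd' (by omega)]; omega), ih hs' hsd' (by omega),
      C.srcI_of_le (x := s k) (by rw [hsd k (by omega)]; omega), foldComp]

theorem tgtI_foldComp (hs : ∀ i < k, C.MComposable i (C.foldComp b s i) (s i))
    (hsd : ∀ i < k, C.dim (s i) = i + 1) {q : ℕ} (hkq : k ≤ q) (hq : q ≤ C.dim b) :
    C.tgtI q (C.foldComp b s k) = C.foldComp (C.tgtI q b) s k := by
  induction k with
  | zero => rfl
  | succ k ih =>
    have hs' : ∀ i < k, C.MComposable i (C.foldComp b s i) (s i) := fun i hi => hs i (by omega)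
    have hsd' : ∀ i < k, C.dim (s i) = i + 1 := fun i hi => hsd i (by omega)
    rw [foldComp, C.tgtI_mcomp (hs k (by omega)) (by omega)
      (by rw [dim_foldComp hs' hsd' (by omega)]; omega), ih hs' hsd' (by omega),
      C.tgtI_of_le (x := s k) (by rw [hsd k (by omega)]; omega), foldComp]

theorem tgtI_foldComp_of_le (hs : ∀ i < k, C.MComposable i (C.foldComp b s i) (s i))
    (hsd : ∀ i < k, C.dim (s i) = i + 1) (hk : k ≤ C.dim b)
    {q : ℕ} (hqk : q ≤ k) :
    C.tgtI q (C.foldComp b s k) = C.foldComp (C.tgtI q b) s q := by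
  induction k with
  | zero =>
    obtain rfl : q = 0 := by omega
    rfl
  | succ k ih =>
    have hs' : ∀ i < k, C.MComposable i (C.foldComp b s i) (s i) := fun i hi => hs i (by omega)
    have hsd' : ∀ i < k, C.dim (s i) = i + 1 := fun i hi => hsd i (by omega)
    rcases eq_or_lt_of_le hqk with rfl | hqk
    · exact tgtI_foldComp hs hsd le_rfl hk
    · rw [foldComp, C.tgtI_mcomp_of_le (hs k (by omega)) (by omega)
        (by rw [dim_foldComp hs' hsd' (by omega)]; omega), ih hs' hsd' (by omega) (by omega)]

end Fold

end OmegaCat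

namespace Expansion

open PreOmegaCat (srcI tgtI mcomp foldComp MComposable)

variable {C : OmegaCat.{u}} (E : Expansion C)

theorem src_iterate_xi {j : ℕ} {w : C.Cell} (hj : j ≤ C.dim w) :
    C.src^[j] (E.xi w) = E.xi (C.tgt^[j] w) := by
  induction j generalizing w with
  | zero => rfl
  | succ j ih =>
    rw [Function.iterate_succ_apply, E.xi_src w (by omega),
      ih (by rw [C.dim_tgt_eq]; omega), ← Function.iterate_succ_apply]

theorem srcI_succ_xi {q : ℕ} {w : C.Cell} (hq : q ≤ C.dim w) :
    C.srcI (q + 1) (E.xi w) = E.xi (C.tgtI q w) := by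
  rw [srcI, E.dim_xi, show C.dim w + 1 - (q + 1) = C.dim w - q by omega,
    E.src_iterate_xi (by omega), tgtI]

theorem dim_xi_srcI {k : ℕ} {x : C.Cell} (hk : k ≤ C.dim x) :
    C.dim (E.xi (C.srcI k x)) = k + 1 := by
  rw [E.dim_xi, C.dim_srcI hk]

theorem tgt_xi_srcI {k : ℕ} {x : C.Cell} (hk : k ≤ C.dim x) :
    C.tgt (E.xi (C.srcI k x)) = C.foldComp (C.srcI k x) (fun i => E.xi (C.srcI i x)) k := by
  rw [E.xi_tgt, C.dim_srcI hk]
  exact OmegaCat.foldComp_congr fun i hi => by rw [C.srcI_srcI hi.le]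

/-- Inductively, the `k`-source of `c ∘_0 ξ_{s_0 x} ∘_1 ⋯ ∘_{k-1} ξ_{s_{k-1} x}` is
`s_k x ∘_0 ξ_{s_0 x} ∘_1 ⋯ ∘_{k-1} ξ_{s_{k-1} x}`, which is the target of `ξ_{s_k x}`. -/
theorem mcomposable_foldComp_xi {k : ℕ} {c x : C.Cell} (hkc : k ≤ C.dim c) (hkx : k ≤ C.dim x)
    (hcx : ∀ i < k, C.srcI i c = C.srcI i x) :
    ∀ i < k, C.MComposable i (C.foldComp c (fun i => E.xi (C.srcI i x)) i)
      (E.xi (C.srcI i x)) := by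
  induction k with
  | zero => intro i hi; omega
  | succ k ih =>
    have hwf := ih (by omega) (by omega) fun i hi => hcx i (by omega)
    have hsd : ∀ i < k, C.dim (E.xi (C.srcI i x)) = i + 1 :=
      fun i hi => E.dim_xi_srcI (by omega)
    intro i hi
    rcases Nat.lt_succ_iff_lt_or_eq.mp hi with hi | rfl
    · exact hwf i hi
    apply C.mcomposable_of_srcI_eq_tgtI
      (by rw [OmegaCat.dim_foldComp hwf hsd (by omega)]; omega)
      (by rw [E.dim_xi_srcI (by omega)]; omega)
    rw [OmegaCat.srcI_foldComp hwf hsd le_rfl (by omega), hcx i (by omega),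
      ← E.tgt_xi_srcI (by omega), ← C.tgtI_tgt (by rw [E.dim_xi_srcI (by omega)]; omega),
      C.tgtI_of_le (by rw [C.dim_tgt_eq, E.dim_xi_srcI (by omega)]; omega)]

theorem tgtI_xi {q : ℕ} {w : C.Cell} (hq : q ≤ C.dim w) :
    C.tgtI q (E.xi w) = C.foldComp (C.tgtI q w) (fun i => E.xi (C.srcI i w)) q := by
  rw [← C.tgtI_tgt (by rw [E.dim_xi]; omega), E.xi_tgt,
    OmegaCat.tgtI_foldComp_of_le (E.mcomposable_foldComp_xi le_rfl le_rfl fun _ _ => rfl)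
      (fun i hi => E.dim_xi_srcI hi.le) le_rfl hq]

section Composable

variable {p : ℕ} {x y : C.Cell}

theorem mcomposable_foldComp_xi_of_composable (hc : C.Composable p y x) :
    ∀ i < p, C.MComposable i (C.foldComp (C.tgtI (p + 1) y) (fun i => E.xi (C.srcI i x)) i)
      (E.xi (C.srcI i x)) :=
  E.mcomposable_foldComp_xi (by rw [C.dim_tgtI hc.1]; omega) (by rw [hc.2.1]; omega)
    fun _ hi => by rw [C.srcI_tgtI (by omega), C.srcI_eq_srcI_of_composable hc hi]

theorem dim_foldComp_xi_of_composable (hc : C.Composable p y x) :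
    C.dim (C.foldComp (C.tgtI (p + 1) y) (fun i => E.xi (C.srcI i x)) p) = p + 1 := by
  rw [OmegaCat.dim_foldComp (E.mcomposable_foldComp_xi_of_composable hc)
    (fun i hi => E.dim_xi_srcI (by rw [hc.2.1]; omega)) (by rw [C.dim_tgtI hc.1]; omega),
    C.dim_tgtI hc.1]

theorem mcomposable_xi_comp_left (hc : C.Composable p y x) :
    C.MComposable p (C.foldComp (C.tgtI (p + 1) y) (fun i => E.xi (C.srcI i x)) p)
      (E.xi x) := by
  apply C.mcomposable_of_srcI_eq_tgtI (by rw [E.dim_foldComp_xi_of_composable hc]; omega)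
    (by rw [E.dim_xi, hc.2.1]; omega)
  rw [OmegaCat.srcI_foldComp (E.mcomposable_foldComp_xi_of_composable hc)
      (fun i hi => E.dim_xi_srcI (by rw [hc.2.1]; omega)) le_rfl
      (by rw [C.dim_tgtI hc.1]; omega),
    C.srcI_tgtI p.lt_succ_self, hc.2.2, E.tgtI_xi (by rw [hc.2.1]; omega)]

theorem mcomposable_xi_comp_right (hc : C.Composable p y x) :
    C.MComposable (p + 1)
      (C.mcomp p (C.foldComp (C.tgtI (p + 1) y) (fun i => E.xi (C.srcI i x)) p) (E.xi x))
      (E.xi y) := by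
  have hL := E.dim_foldComp_xi_of_composable hc
  have hl := E.mcomposable_xi_comp_left hc
  apply C.mcomposable_of_srcI_eq_tgtI
    (by rw [C.dim_mcomp hl, hL, E.dim_xi, hc.2.1]; omega) (by rw [E.dim_xi]; omega)
  rw [C.srcI_mcomp hl p.lt_succ_self (by rw [hL]; omega), C.srcI_of_le hL.le,
    E.srcI_succ_xi (by rw [hc.2.1]; omega), E.tgtI_xi hc.1, foldComp, ← hc.2.2]
  congr 1
  exact OmegaCat.foldComp_congr fun i hi => by rw [C.srcI_eq_srcI_of_composable hc hi]

end Composable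

end Expansion

structure IsJointEmbedding (P : PreOmegaCat.{u}) {ι : Type u} (Q : ι → OmegaCat.{u})
    (φ : ∀ i, P.Cell → (Q i).Cell) : Prop where
  dim_src : ∀ x, P.dim (P.src x) = P.dim x - 1
  dim_tgt : ∀ x, P.dim (P.tgt x) = P.dim x - 1
  dim_unit : ∀ x, P.dim (P.unit x) = P.dim x + 1
  dim_comp : ∀ p x y, (∀ i, (Q i).Composable p (φ i x) (φ i y)) →
    P.dim (P.comp p x y) = P.dim x
  map_dim : ∀ i x, (Q i).dim (φ i x) = P.dim x
  map_src : ∀ i x, φ i (P.src x) = (Q i).src (φ i x)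
  map_tgt : ∀ i x, φ i (P.tgt x) = (Q i).tgt (φ i x)
  map_unit : ∀ i x, φ i (P.unit x) = (Q i).unit (φ i x)
  map_comp : ∀ i p x y, (∀ i, (Q i).Composable p (φ i x) (φ i y)) →
    φ i (P.comp p x y) = (Q i).comp p (φ i x) (φ i y)
  ext : ∀ x y, P.dim x = P.dim y → (∀ i, φ i x = φ i y) → x = y

namespace IsJointEmbedding

open PreOmegaCat (srcI tgtI pad mcomp foldComp MComposable)

section PreOmegaCat

variable {P : PreOmegaCat.{u}} {ι : Type u} {Q : ι → OmegaCat.{u}}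
  {φ : ∀ i, P.Cell → (Q i).Cell}

theorem map_srcI (h : IsJointEmbedding P Q φ) (i : ι) (p : ℕ) (x : P.Cell) :
    φ i (P.srcI p x) = (Q i).srcI p (φ i x) := by
  rw [srcI, srcI, h.map_dim]
  exact Function.Semiconj.iterate_right (h.map_src i) _ x

theorem map_tgtI (h : IsJointEmbedding P Q φ) (i : ι) (p : ℕ) (x : P.Cell) :
    φ i (P.tgtI p x) = (Q i).tgtI p (φ i x) := by
  rw [tgtI, tgtI, h.map_dim]
  exact Function.Semiconj.iterate_right (h.map_tgt i) _ x

theorem map_unit_iterate (h : IsJointEmbedding P Q φ) (i : ι) (k : ℕ) (x : P.Cell) :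
    φ i (P.unit^[k] x) = (Q i).unit^[k] (φ i x) :=
  Function.Semiconj.iterate_right (h.map_unit i) k x

theorem map_pad (h : IsJointEmbedding P Q φ) (i : ι) (m : ℕ) (x : P.Cell) :
    φ i (P.pad m x) = (Q i).pad m (φ i x) := by
  rw [pad, pad, h.map_dim, h.map_unit_iterate]

theorem map_composable (h : IsJointEmbedding P Q φ) {p : ℕ} {x y : P.Cell}
    (hc : P.Composable p x y) (i : ι) :
    (Q i).Composable p (φ i x) (φ i y) := by
  obtain ⟨h₁, h₂, h₃⟩ := hc
  exact ⟨by rwa [h.map_dim], by rwa [h.map_dim, h.map_dim], by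
    rw [← h.map_srcI, ← h.map_tgtI, h₃]⟩

theorem dim_comp' (h : IsJointEmbedding P Q φ) {p : ℕ} {x y : P.Cell}
    (hc : P.Composable p x y) : P.dim (P.comp p x y) = P.dim x :=
  h.dim_comp _ _ _ (h.map_composable hc)

theorem map_comp' (h : IsJointEmbedding P Q φ) {p : ℕ} {x y : P.Cell}
    (hc : P.Composable p x y) (i : ι) : φ i (P.comp p x y) = (Q i).comp p (φ i x) (φ i y) :=
  h.map_comp i _ _ _ (h.map_composable hc)

theorem composable_of_map (h : IsJointEmbedding P Q φ) {p : ℕ} {x y : P.Cell}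
    (hx : p < P.dim x) (hxy : P.dim y = P.dim x)
    (hc : ∀ i, (Q i).Composable p (φ i x) (φ i y)) : P.Composable p x y := by
  refine ⟨hx, hxy, h.ext _ _ ?_ fun i => ?_⟩
  · rw [P.dim_srcI_of h.dim_src hx.le, P.dim_tgtI_of h.dim_tgt (by omega)]
  · rw [h.map_srcI, h.map_tgtI, (hc i).2.2]

def toOmegaCat (h : IsJointEmbedding P Q φ) : OmegaCat.{u} where
  toPreOmegaCat := P
  dim_src x _ := h.dim_src x
  dim_tgt x _ := h.dim_tgt x
  src_dim0 x h₀ := h.ext _ _ (by rw [h.dim_src, h₀]) fun i => by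
    rw [h.map_src]; exact (Q i).src_dim0 _ (by rw [h.map_dim, h₀])
  tgt_dim0 x h₀ := h.ext _ _ (by rw [h.dim_tgt, h₀]) fun i => by
    rw [h.map_tgt]; exact (Q i).tgt_dim0 _ (by rw [h.map_dim, h₀])
  glob_ss x h₂ := h.ext _ _ (by simp only [h.dim_src, h.dim_tgt]) fun i => by
    rw [h.map_src, h.map_src, h.map_src, h.map_tgt]
    exact (Q i).glob_ss _ (by rwa [h.map_dim])
  glob_tt x h₂ := h.ext _ _ (by simp only [h.dim_src, h.dim_tgt]) fun i => by
    rw [h.map_tgt, h.map_tgt, h.map_src, h.map_tgt]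
    exact (Q i).glob_tt _ (by rwa [h.map_dim])
  dim_unit := h.dim_unit
  src_unit x := h.ext _ _ (by rw [h.dim_src, h.dim_unit, Nat.add_sub_cancel]) fun i => by
    rw [h.map_src, h.map_unit, (Q i).src_unit]
  tgt_unit x := h.ext _ _ (by rw [h.dim_tgt, h.dim_unit, Nat.add_sub_cancel]) fun i => by
    rw [h.map_tgt, h.map_unit, (Q i).tgt_unit]
  dim_comp _ _ _ hc := h.dim_comp' hc
  src_comp_top p x y hc htop :=
    h.ext _ _ (by rw [h.dim_src, h.dim_src, h.dim_comp' hc, hc.2.1]) fun i => by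
      rw [h.map_src, h.map_comp' hc i, h.map_src]
      exact (Q i).src_comp_top _ _ _ (h.map_composable hc i) (by rwa [h.map_dim])
  tgt_comp_top p x y hc htop :=
    h.ext _ _ (by rw [h.dim_tgt, h.dim_tgt, h.dim_comp' hc]) fun i => by
      rw [h.map_tgt, h.map_comp' hc i, h.map_tgt]
      exact (Q i).tgt_comp_top _ _ _ (h.map_composable hc i) (by rwa [h.map_dim])
  src_comp p x y hc hlt := by
    have hc' : P.Composable p (P.src x) (P.src y) :=
      h.composable_of_map (by rw [h.dim_src]; omega) (by rw [h.dim_src, h.dim_src, hc.2.1])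
        fun i => by
          rw [h.map_src, h.map_src]
          exact (Q i).composable_src (h.map_composable hc i) (by rwa [h.map_dim])
    refine h.ext _ _ (by rw [h.dim_src, h.dim_comp' hc, h.dim_comp' hc', h.dim_src])
      fun i => ?_
    rw [h.map_src, h.map_comp' hc i, h.map_comp' hc' i, h.map_src, h.map_src]
    exact (Q i).src_comp _ _ _ (h.map_composable hc i) (by rwa [h.map_dim])
  tgt_comp p x y hc hlt := by
    have hc' : P.Composable p (P.tgt x) (P.tgt y) :=
      h.composable_of_map (by rw [h.dim_tgt]; omega) (by rw [h.dim_tgt, h.dim_tgt, hc.2.1])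
        fun i => by
          rw [h.map_tgt, h.map_tgt]
          exact (Q i).composable_tgt (h.map_composable hc i) (by rwa [h.map_dim])
    refine h.ext _ _ (by rw [h.dim_tgt, h.dim_comp' hc, h.dim_comp' hc', h.dim_tgt])
      fun i => ?_
    rw [h.map_tgt, h.map_comp' hc i, h.map_comp' hc' i, h.map_tgt, h.map_tgt]
    exact (Q i).tgt_comp _ _ _ (h.map_composable hc i) (by rwa [h.map_dim])
  comp_assoc p x y z h₁ h₂ := by
    have hl : P.Composable p (P.comp p x y) z :=
      h.composable_of_map (by rw [h.dim_comp' h₁]; exact h₁.1)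
        (by rw [h.dim_comp' h₁, h₂.2.1, h₁.2.1]) fun i => by
          rw [h.map_comp' h₁ i]
          exact (Q i).composable_comp_left (h.map_composable h₁ i) (h.map_composable h₂ i)
    have hr : P.Composable p x (P.comp p y z) :=
      h.composable_of_map h₁.1 (by rw [h.dim_comp' h₂, h₁.2.1]) fun i => by
        rw [h.map_comp' h₂ i]
        exact (Q i).composable_comp_right (h.map_composable h₁ i) (h.map_composable h₂ i)
    refine h.ext _ _ (by rw [h.dim_comp' hl, h.dim_comp' h₁, h.dim_comp' hr])
      fun i => ?_
    rw [h.map_comp' hl i, h.map_comp' hr i, h.map_comp' h₁ i,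
      h.map_comp' h₂ i]
    exact (Q i).comp_assoc _ _ _ _ (h.map_composable h₁ i) (h.map_composable h₂ i)
  comp_unit_src p x hp := by
    have hd : P.dim (P.unit^[P.dim x - p] (P.srcI p x)) = P.dim x := by
      rw [P.dim_unit_iterate_of h.dim_unit, P.dim_srcI_of h.dim_src hp.le]; omega
    have hc : P.Composable p x (P.unit^[P.dim x - p] (P.srcI p x)) :=
      h.composable_of_map hp hd fun i => by
        rw [h.map_unit_iterate, h.map_srcI, ← h.map_dim i x]
        exact (Q i).composable_unit_iterate_srcI (by rwa [h.map_dim])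
    refine h.ext _ _ (h.dim_comp' hc) fun i => ?_
    rw [h.map_comp' hc i, h.map_unit_iterate, h.map_srcI, ← h.map_dim i x]
    exact (Q i).comp_unit_src _ _ (by rwa [h.map_dim])
  comp_unit_tgt p x hp := by
    have hd : P.dim (P.unit^[P.dim x - p] (P.tgtI p x)) = P.dim x := by
      rw [P.dim_unit_iterate_of h.dim_unit, P.dim_tgtI_of h.dim_tgt hp.le]; omega
    have hc : P.Composable p (P.unit^[P.dim x - p] (P.tgtI p x)) x :=
      h.composable_of_map (by rwa [hd]) hd.symm fun i => by
        rw [h.map_unit_iterate, h.map_tgtI, ← h.map_dim i x]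
        exact (Q i).composable_unit_iterate_tgtI (by rwa [h.map_dim])
    refine h.ext _ _ (by rw [h.dim_comp' hc, hd]) fun i => ?_
    rw [h.map_comp' hc i, h.map_unit_iterate, h.map_tgtI, ← h.map_dim i x]
    exact (Q i).comp_unit_tgt _ _ (by rwa [h.map_dim])
  interchange p q x y x' y' hqp h₁ h₂ h₃ h₄ := by
    have hl : P.Composable q (P.comp p x y) (P.comp p x' y') :=
      h.composable_of_map (by rw [h.dim_comp' h₁]; exact h₃.1)
        (by rw [h.dim_comp' h₁, h.dim_comp' h₂, h₃.2.1]) fun i => by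
          rw [h.map_comp' h₁ i, h.map_comp' h₂ i]
          exact (Q i).composable_comp_comp_of_lt hqp (h.map_composable h₁ i)
            (h.map_composable h₂ i) (h.map_composable h₃ i)
    have hr : P.Composable p (P.comp q x x') (P.comp q y y') :=
      h.composable_of_map (by rw [h.dim_comp' h₃]; exact h₁.1)
        (by rw [h.dim_comp' h₃, h.dim_comp' h₄, h₁.2.1]) fun i => by
          rw [h.map_comp' h₃ i, h.map_comp' h₄ i]
          exact (Q i).composable_comp_comp_of_gt hqp (h.map_composable h₁ i)
            (h.map_composable h₂ i) (h.map_composable h₃ i) (h.map_composable h₄ i)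
    refine h.ext _ _ (by rw [h.dim_comp' hl, h.dim_comp' h₁, h.dim_comp' hr,
      h.dim_comp' h₃]) fun i => ?_
    rw [h.map_comp' hl i, h.map_comp' hr i, h.map_comp' h₁ i,
      h.map_comp' h₂ i, h.map_comp' h₃ i, h.map_comp' h₄ i]
    exact (Q i).interchange _ _ _ _ _ _ hqp (h.map_composable h₁ i) (h.map_composable h₂ i)
      (h.map_composable h₃ i) (h.map_composable h₄ i)
  unit_comp p x y hc := by
    have hc' : P.Composable p (P.unit x) (P.unit y) :=
      h.composable_of_map (by rw [h.dim_unit]; exact hc.1.trans (Nat.lt_succ_self _))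
        (by rw [h.dim_unit, h.dim_unit, hc.2.1]) fun i => by
          rw [h.map_unit, h.map_unit]
          exact (Q i).composable_unit (h.map_composable hc i)
    refine h.ext _ _ (by rw [h.dim_unit, h.dim_comp' hc, h.dim_comp' hc', h.dim_unit])
      fun i => ?_
    rw [h.map_unit, h.map_comp' hc i, h.map_comp' hc' i, h.map_unit, h.map_unit]
    exact (Q i).unit_comp _ _ _ (h.map_composable hc i)

def functor (h : IsJointEmbedding P Q φ) (i : ι) : OmegaFunctor h.toOmegaCat (Q i) where
  map := φ i
  map_dim := h.map_dim i
  map_src := h.map_src i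
  map_tgt := h.map_tgt i
  map_comp _ _ _ hc := h.map_comp' hc i
  map_unit := h.map_unit i

end PreOmegaCat

section OmegaCat

variable {C : OmegaCat.{u}} {ι : Type u} {Q : ι → OmegaCat.{u}}
  {φ : ∀ i, C.Cell → (Q i).Cell}

theorem map_mcomp (h : IsJointEmbedding C.toPreOmegaCat Q φ) {p : ℕ} {x y : C.Cell}
    (hxy : C.MComposable p x y) (i : ι) :
    φ i (C.mcomp p x y) = (Q i).mcomp p (φ i x) (φ i y) := by
  rw [mcomp, h.map_comp' hxy i, h.map_pad, h.map_pad, mcomp, h.map_dim, h.map_dim]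

theorem mcomposable_of_map (h : IsJointEmbedding C.toPreOmegaCat Q φ) {p : ℕ} {x y : C.Cell}
    (hp : p < max (C.dim x) (C.dim y)) (hxy : ∀ i, (Q i).MComposable p (φ i x) (φ i y)) :
    C.MComposable p x y :=
  h.composable_of_map (by rw [C.dim_pad]; omega) (by rw [C.dim_pad, C.dim_pad]; omega)
    fun i => by
    rw [h.map_pad, h.map_pad, ← h.map_dim i x, ← h.map_dim i y]
    exact hxy i

variable {b : C.Cell} {s : ℕ → C.Cell} {k : ℕ}

theorem map_foldComp (h : IsJointEmbedding C.toPreOmegaCat Q φ)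
    (hs : ∀ j < k, C.MComposable j (C.foldComp b s j) (s j)) (i : ι) :
    φ i (C.foldComp b s k) = (Q i).foldComp (φ i b) (fun j => φ i (s j)) k := by
  induction k with
  | zero => rfl
  | succ k ih =>
    rw [foldComp, h.map_mcomp (hs k (by omega)), ih fun j hj => hs j (by omega), foldComp]

theorem mcomposable_foldComp_of_map (h : IsJointEmbedding C.toPreOmegaCat Q φ)
    (hk : k ≤ C.dim b) (hs : ∀ i, ∀ j < k,
      (Q i).MComposable j ((Q i).foldComp (φ i b) (fun j => φ i (s j)) j) (φ i (s j))) :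
    ∀ j < k, C.MComposable j (C.foldComp b s j) (s j) := by
  induction k with
  | zero => intro j hj; omega
  | succ k ih =>
    have hwf := ih (by omega) fun i j hj => hs i j (by omega)
    intro j hj
    rcases Nat.lt_succ_iff_lt_or_eq.mp hj with hj | rfl
    · exact hwf j hj
    refine h.mcomposable_of_map ?_ fun i => ?_
    · have := OmegaCat.le_dim_foldComp hwf
      omega
    · rw [h.map_foldComp hwf]
      exact hs i j (by omega)

end OmegaCat

section Expansion

variable {C : OmegaCat.{u}} {ι : Type u} {X : ι → ExpCatObj.{u}}
  {φ : ∀ i, C.Cell → (X i).cat.Cell} {k : ℕ}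

theorem mcomposable_foldComp_xi_of_map
    (h : IsJointEmbedding C.toPreOmegaCat (fun i => (X i).cat) φ) {ξ : C.Cell → C.Cell}
    (map_ξ : ∀ i x, φ i (ξ x) = (X i).exp.xi (φ i x)) {c x : C.Cell}
    (hkc : k ≤ C.dim c) (hkx : k ≤ C.dim x) (hcx : ∀ i < k, C.srcI i c = C.srcI i x) :
    ∀ j < k, C.MComposable j (C.foldComp c (fun j => ξ (C.srcI j x)) j) (ξ (C.srcI j x)) :=
  h.mcomposable_foldComp_of_map hkc fun i => by
    simp only [map_ξ, h.map_srcI]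
    exact (X i).exp.mcomposable_foldComp_xi (by rwa [h.map_dim]) (by rwa [h.map_dim])
      fun j hj => by rw [← h.map_srcI, ← h.map_srcI, hcx j hj]

theorem map_foldComp_xi (h : IsJointEmbedding C.toPreOmegaCat (fun i => (X i).cat) φ)
    {ξ : C.Cell → C.Cell} (map_ξ : ∀ i x, φ i (ξ x) = (X i).exp.xi (φ i x)) {c x : C.Cell}
    (hwf : ∀ j < k, C.MComposable j (C.foldComp c (fun j => ξ (C.srcI j x)) j) (ξ (C.srcI j x)))
    (i : ι) : φ i (C.foldComp c (fun j => ξ (C.srcI j x)) k) =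
      (X i).cat.foldComp (φ i c) (fun j => (X i).exp.xi ((X i).cat.srcI j (φ i x))) k := by
  rw [h.map_foldComp hwf]
  simp only [map_ξ, h.map_srcI]

def toExpansion (h : IsJointEmbedding C.toPreOmegaCat (fun i => (X i).cat) φ) (o : C.Cell)
    (ξ : C.Cell → C.Cell) (dim_o : C.dim o = 0) (dim_ξ : ∀ x, C.dim (ξ x) = C.dim x + 1)
    (map_o : ∀ i, φ i o = (X i).exp.orig)
    (map_ξ : ∀ i x, φ i (ξ x) = (X i).exp.xi (φ i x)) :
    Expansion C where
  orig := o
  dim_orig := dim_o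
  xi := ξ
  dim_xi := dim_ξ
  xi_src0 x h₀ := h.ext _ _ (by rw [C.dim_src_eq, dim_ξ, h₀, dim_o]) fun i => by
    rw [h.map_src, map_ξ, map_o]
    exact (X i).exp.xi_src0 _ (by rw [h.map_dim, h₀])
  xi_src x h₀ := h.ext _ _ (by rw [C.dim_src_eq, dim_ξ, dim_ξ, C.dim_tgt_eq]; omega) fun i => by
    rw [h.map_src, map_ξ, map_ξ, h.map_tgt]
    exact (X i).exp.xi_src _ (by rwa [h.map_dim])
  xi_tgt x := by
    have hwf := h.mcomposable_foldComp_xi_of_map map_ξ (c := x) (x := x) le_rfl le_rfl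
      fun _ _ => rfl
    refine h.ext _ _ ?_ fun i => ?_
    · rw [C.dim_tgt_eq, dim_ξ, OmegaCat.dim_foldComp hwf
        (fun j hj => by rw [dim_ξ, C.dim_srcI hj.le]) le_rfl, Nat.add_sub_cancel]
    · rw [h.map_tgt, map_ξ, (X i).exp.xi_tgt, h.map_foldComp_xi map_ξ hwf, h.map_dim]
  xi_comp p x y hc := by
    have hwf := h.mcomposable_foldComp_xi_of_map map_ξ (c := C.tgtI (p + 1) y) (k := p)
      (by rw [C.dim_tgtI hc.1]; omega) (by rw [hc.2.1]; omega)
      fun _ hi => by rw [C.srcI_tgtI (by omega), C.srcI_eq_srcI_of_composable hc hi]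
    have hL : ∀ i, φ i (C.foldComp (C.tgtI (p + 1) y) (fun j => ξ (C.srcI j x)) p) =
        (X i).cat.foldComp ((X i).cat.tgtI (p + 1) (φ i y))
          (fun j => (X i).exp.xi ((X i).cat.srcI j (φ i x))) p :=
      fun i => by rw [h.map_foldComp_xi map_ξ hwf, h.map_tgtI]
    have hdL : C.dim (C.foldComp (C.tgtI (p + 1) y) (fun j => ξ (C.srcI j x)) p) = p + 1 := by
      rw [OmegaCat.dim_foldComp hwf
        (fun j hj => by rw [dim_ξ, C.dim_srcI (by rw [hc.2.1]; omega)])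
        (by rw [C.dim_tgtI hc.1]; omega), C.dim_tgtI hc.1]
    have hl := h.mcomposable_of_map (p := p) (y := ξ x) (by rw [hdL]; omega) fun i => by
      rw [hL, map_ξ]
      exact (X i).exp.mcomposable_xi_comp_left (h.map_composable hc i)
    have hr := h.mcomposable_of_map (p := p + 1) (y := ξ y)
      (by rw [C.dim_mcomp hl, dim_ξ, dim_ξ]; omega) fun i => by
        rw [h.map_mcomp hl, hL, map_ξ, map_ξ]
        exact (X i).exp.mcomposable_xi_comp_right (h.map_composable hc i)
    refine h.ext _ _ ?_ fun i => ?_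
    · rw [dim_ξ, C.dim_comp _ _ _ hc, C.dim_mcomp hr, C.dim_mcomp hl, hdL, dim_ξ, dim_ξ, hc.2.1]
      omega
    · rw [map_ξ, h.map_comp' hc i, (X i).exp.xi_comp _ _ _ (h.map_composable hc i),
        h.map_mcomp hr, h.map_mcomp hl, hL, map_ξ, map_ξ]
  xi_unit u := h.ext _ _ (by rw [dim_ξ, C.dim_unit, C.dim_unit, dim_ξ]) fun i => by
    rw [map_ξ, h.map_unit, h.map_unit, map_ξ, (X i).exp.xi_unit]
  xi_xi u := h.ext _ _ (by rw [dim_ξ, C.dim_unit]) fun i => by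
    rw [map_ξ, map_ξ, h.map_unit, map_ξ, (X i).exp.xi_xi]
  xi_orig := h.ext _ _ (by rw [dim_ξ, C.dim_unit]) fun i => by
    rw [map_ξ, map_o, h.map_unit, map_o, (X i).exp.xi_orig]

end Expansion

end IsJointEmbedding

section Limits

open Limits

variable {J : Type u} [Category.{u} J]

@[ext]
structure LimCell (G : J ⥤ OmegaCat.{u}) : Type u where
  dim : ℕ
  cell : ∀ j, (G.obj j).Cell
  dim_cell : ∀ j, (G.obj j).dim (cell j) = dim
  map_cell : ∀ ⦃j j'⦄ (f : j ⟶ j'), OmegaFunctor.map (G.map f) (cell j) = cell j'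

namespace LimCell

variable {G : J ⥤ OmegaCat.{u}}

open Classical in
def comp (p : ℕ) (a b : LimCell G) : LimCell G :=
  if h : ∀ j, (G.obj j).Composable p (a.cell j) (b.cell j) then
    { dim := a.dim
      cell := fun j => (G.obj j).comp p (a.cell j) (b.cell j)
      dim_cell := fun j => by rw [(G.obj j).dim_comp _ _ _ (h j), a.dim_cell]
      map_cell := fun j j' f => by
        rw [OmegaFunctor.map_comp _ _ _ _ (h j), a.map_cell, b.map_cell] }
  else a

theorem dim_comp {p : ℕ} {a b : LimCell G}
    (h : ∀ j, (G.obj j).Composable p (a.cell j) (b.cell j)) : (comp p a b).dim = a.dim := by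
  rw [comp, dif_pos h]

theorem cell_comp {p : ℕ} {a b : LimCell G}
    (h : ∀ j, (G.obj j).Composable p (a.cell j) (b.cell j)) (j : J) :
    (comp p a b).cell j = (G.obj j).comp p (a.cell j) (b.cell j) := by
  rw [comp, dif_pos h]

def preOmegaCat (G : J ⥤ OmegaCat.{u}) : PreOmegaCat.{u} where
  Cell := LimCell G
  dim := LimCell.dim
  src a :=
    { dim := a.dim - 1
      cell := fun j => (G.obj j).src (a.cell j)
      dim_cell := fun j => by rw [OmegaCat.dim_src_eq, a.dim_cell]
      map_cell := fun j j' f => by rw [OmegaFunctor.map_src, a.map_cell] }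
  tgt a :=
    { dim := a.dim - 1
      cell := fun j => (G.obj j).tgt (a.cell j)
      dim_cell := fun j => by rw [OmegaCat.dim_tgt_eq, a.dim_cell]
      map_cell := fun j j' f => by rw [OmegaFunctor.map_tgt, a.map_cell] }
  comp := comp
  unit a :=
    { dim := a.dim + 1
      cell := fun j => (G.obj j).unit (a.cell j)
      dim_cell := fun j => by rw [(G.obj j).dim_unit, a.dim_cell]
      map_cell := fun j j' f => by rw [OmegaFunctor.map_unit, a.map_cell] }

theorem isJointEmbedding (G : J ⥤ OmegaCat.{u}) :
    IsJointEmbedding (preOmegaCat G) G.obj fun j (a : LimCell G) => a.cell j where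
  dim_src _ := rfl
  dim_tgt _ := rfl
  dim_unit _ := rfl
  dim_comp _ _ _ h := dim_comp h
  map_dim j a := a.dim_cell j
  map_src _ _ := rfl
  map_tgt _ _ := rfl
  map_unit _ _ := rfl
  map_comp j _ _ _ h := cell_comp h j
  ext _ _ hd hc := LimCell.ext hd (funext hc)

def ofCone (c : Cone G) (e : c.pt.Cell) : LimCell G where
  dim := c.pt.dim e
  cell j := OmegaFunctor.map (c.π.app j) e
  dim_cell j := OmegaFunctor.map_dim (c.π.app j) e
  map_cell _ _ f := congrFun (congrArg OmegaFunctor.map (c.w f)) e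

end LimCell

def limOmegaCat (G : J ⥤ OmegaCat.{u}) : OmegaCat.{u} := (LimCell.isJointEmbedding G).toOmegaCat

def limCone (G : J ⥤ OmegaCat.{u}) : Cone G where
  pt := limOmegaCat G
  π :=
    { app := (LimCell.isJointEmbedding G).functor
      naturality := fun _ _ f => OmegaFunctor.ext (funext fun a => (a.map_cell f).symm) }

def limConeIsLimit (G : J ⥤ OmegaCat.{u}) : IsLimit (limCone G) where
  lift c :=
    { map := LimCell.ofCone c
      map_dim := fun _ => rfl
      map_src := fun e => LimCell.ext (c.pt.dim_src_eq e)
        (funext fun j => OmegaFunctor.map_src (c.π.app j) e)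
      map_tgt := fun e => LimCell.ext (c.pt.dim_tgt_eq e)
        (funext fun j => OmegaFunctor.map_tgt (c.π.app j) e)
      map_comp := fun p a b h => by
        have h' : ∀ j, (G.obj j).Composable p (OmegaFunctor.map (c.π.app j) a)
            (OmegaFunctor.map (c.π.app j) b) := fun j => OmegaFunctor.map_composable _ h
        refine LimCell.ext ?_ (funext fun j => ?_)
        · exact (c.pt.dim_comp p a b h).trans
            ((LimCell.isJointEmbedding G).dim_comp p (.ofCone c a) (.ofCone c b) h').symm
        · exact (OmegaFunctor.map_comp _ p a b h).trans
            ((LimCell.isJointEmbedding G).map_comp j p (.ofCone c a) (.ofCone c b) h').symm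
      map_unit := fun e => LimCell.ext (c.pt.dim_unit e)
        (funext fun j => OmegaFunctor.map_unit (c.π.app j) e) }
  fac _ _ := rfl
  uniq c m hm := OmegaFunctor.ext (funext fun e => LimCell.ext (OmegaFunctor.map_dim m e)
    (funext fun j => congrFun (congrArg OmegaFunctor.map (hm j)) e))

end Limits

section ExpLimits

open Limits

variable {J : Type u} [Category.{u} J] (F : J ⥤ ExpCatObj.{u})

namespace LimCell

def orig : LimCell (F ⋙ forgetExp) where
  dim := 0
  cell j := (F.obj j).exp.orig
  dim_cell j := (F.obj j).exp.dim_orig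
  map_cell _ _ f := (F.map f).map_orig

def xi (a : LimCell (F ⋙ forgetExp)) : LimCell (F ⋙ forgetExp) where
  dim := a.dim + 1
  cell j := (F.obj j).exp.xi (a.cell j)
  dim_cell j := ((F.obj j).exp.dim_xi _).trans (congrArg (· + 1) (a.dim_cell j))
  map_cell _ _ f := ((F.map f).map_xi _).trans (congrArg _ (a.map_cell f))

end LimCell

def limExpCatObj : ExpCatObj.{u} where
  cat := limOmegaCat (F ⋙ forgetExp)
  exp := (LimCell.isJointEmbedding (F ⋙ forgetExp)).toExpansion (X := F.obj)
    (LimCell.orig F) (LimCell.xi F) rfl (fun _ => rfl) (fun _ => rfl) (fun _ _ => rfl)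

def limExpCone : Cone F where
  pt := limExpCatObj F
  π :=
    { app := fun j =>
        ⟨(LimCell.isJointEmbedding (F ⋙ forgetExp)).functor j, rfl, fun _ => rfl⟩
      naturality := fun _ _ f =>
        ExpHom.ext (OmegaFunctor.ext (funext fun a => (a.map_cell f).symm)) }

def limExpConeIsLimit : IsLimit (limExpCone F) where
  lift c :=
    { func := (limConeIsLimit (F ⋙ forgetExp)).lift (forgetExp.mapCone c)
      map_orig := LimCell.ext c.pt.exp.dim_orig (funext fun j => (c.π.app j).map_orig)
      map_xi := fun e => LimCell.ext (c.pt.exp.dim_xi e) (funext fun j => (c.π.app j).map_xi e) }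
  fac _ _ := rfl
  uniq c m hm := ExpHom.ext ((limConeIsLimit (F ⋙ forgetExp)).uniq (forgetExp.mapCone c)
    m.func fun j => congrArg ExpHom.func (hm j))

instance : HasLimitsOfSize.{u, u} ExpCatObj.{u} where
  has_limits_of_shape _ _ :=
    { has_limit := fun F => HasLimit.mk ⟨limExpCone F, limExpConeIsLimit F⟩ }

instance : PreservesLimitsOfSize.{u, u} forgetExp.{u} where
  preservesLimitsOfShape :=
    { preservesLimit := fun {F} => preservesLimit_of_preserves_limit_cone (limExpConeIsLimit F)
        (limConeIsLimit (F ⋙ forgetExp)) }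

end ExpLimits

section SolutionSet

inductive Term (C : OmegaCat.{u}) : Type u
  | of : C.Cell → Term C
  | orig : Term C
  | src : Term C → Term C
  | tgt : Term C → Term C
  | unit : Term C → Term C
  | comp : ℕ → Term C → Term C → Term C
  | xi : Term C → Term C

namespace Term

variable {C : OmegaCat.{u}} (X : ExpCatObj.{u}) (f : C ⟶ forgetExp.obj X)

def eval : Term C → X.cat.Cell
  | of c => OmegaFunctor.map f c
  | orig => X.exp.orig
  | src t => X.cat.src (eval t)
  | tgt t => X.cat.tgt (eval t)
  | unit t => X.cat.unit (eval t)
  | comp p t t' => X.cat.comp p (eval t) (eval t')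
  | xi t => X.exp.xi (eval t)

/-- The sub-ω-category with expansion of `X` generated by the image of `f`, presented as the
quotient of the terms over `C` by the kernel of evaluation. -/
def imagePreOmegaCat : PreOmegaCat.{u} where
  Cell := Quotient (Setoid.ker (eval X f))
  dim q := X.cat.dim (Setoid.kerLift (eval X f) q)
  src := Quotient.map src fun _ _ h => congrArg X.cat.src h
  tgt := Quotient.map tgt fun _ _ h => congrArg X.cat.tgt h
  comp p := Quotient.map₂ (comp p) fun _ _ h _ _ h' => congrArg₂ (X.cat.comp p) h h'
  unit := Quotient.map unit fun _ _ h => congrArg X.cat.unit h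

theorem isJointEmbedding_image :
    IsJointEmbedding (imagePreOmegaCat X f) (fun _ : PUnit => X.cat)
      fun _ => Setoid.kerLift (eval X f) where
  dim_src q := Quotient.inductionOn q fun _ => X.cat.dim_src_eq _
  dim_tgt q := Quotient.inductionOn q fun _ => X.cat.dim_tgt_eq _
  dim_unit q := Quotient.inductionOn q fun _ => X.cat.dim_unit _
  dim_comp p q q' := Quotient.inductionOn₂ q q' fun _ _ h => X.cat.dim_comp p _ _ (h ⟨⟩)
  map_dim _ _ := rfl
  map_src _ q := Quotient.inductionOn q fun _ => rfl
  map_tgt _ q := Quotient.inductionOn q fun _ => rfl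
  map_unit _ q := Quotient.inductionOn q fun _ => rfl
  map_comp _ _ q q' := Quotient.inductionOn₂ q q' fun _ _ _ => rfl
  ext _ _ _ h := Setoid.kerLift_injective _ (h ⟨⟩)

def imageObj : ExpCatObj.{u} where
  cat := (isJointEmbedding_image X f).toOmegaCat
  exp := (isJointEmbedding_image X f).toExpansion (X := fun _ => X) ⟦orig⟧
    (Quotient.map xi fun _ _ h => congrArg X.exp.xi h) X.exp.dim_orig
    (fun q => Quotient.inductionOn q fun _ => X.exp.dim_xi _) (fun _ => rfl)
    (fun _ q => Quotient.inductionOn q fun _ => rfl)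

def imageGen : C ⟶ forgetExp.obj (imageObj X f) where
  map c := ⟦of c⟧
  map_dim c := OmegaFunctor.map_dim f c
  map_src c := Quotient.sound (OmegaFunctor.map_src f c)
  map_tgt c := Quotient.sound (OmegaFunctor.map_tgt f c)
  map_comp p a b h := Quotient.sound (OmegaFunctor.map_comp f p a b h)
  map_unit c := Quotient.sound (OmegaFunctor.map_unit f c)

/-- `imageObj X f` depends only on this datum, which ranges over a small type. -/
def imageData : Setoid (Term C) × (Term C → ℕ) :=
  (Setoid.ker (eval X f), fun t => X.cat.dim (eval X f t))

variable {X f} {Y : ExpCatObj.{u}} {g : C ⟶ forgetExp.obj Y}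

def imageLift (h : imageData X f = imageData Y g) : imageObj X f ⟶ Y where
  func :=
    { map := Quotient.lift (eval Y g) fun a b =>
        (Setoid.ext_iff.mp (congrArg Prod.fst h) a b).mp
      map_dim := fun q => Quotient.inductionOn q fun t => (congrFun (congrArg Prod.snd h) t).symm
      map_src := fun q => Quotient.inductionOn q fun _ => rfl
      map_tgt := fun q => Quotient.inductionOn q fun _ => rfl
      map_comp := fun _ q q' _ => Quotient.inductionOn₂ q q' fun _ _ => rfl
      map_unit := fun q => Quotient.inductionOn q fun _ => rfl }
  map_orig := rfl
  map_xi q := Quotient.inductionOn q fun _ => rfl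

theorem imageGen_comp_imageLift (h : imageData X f = imageData Y g) :
    imageGen X f ≫ forgetExp.map (imageLift h) = g :=
  rfl

end Term

theorem solutionSetCondition_forgetExp : SolutionSetCondition.{u} forgetExp.{u} := fun C => by
  let data := fun Xf : Σ X : ExpCatObj.{u}, C ⟶ forgetExp.obj X => Term.imageData Xf.1 Xf.2
  refine ⟨Set.range data, fun i => Term.imageObj i.2.choose.1 i.2.choose.2,
    fun i => Term.imageGen i.2.choose.1 i.2.choose.2, fun X g => ?_⟩
  let i : Set.range data := ⟨data ⟨X, g⟩, ⟨X, g⟩, rfl⟩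
  exact ⟨i, Term.imageLift i.2.choose_spec, Term.imageGen_comp_imageLift i.2.choose_spec⟩

end SolutionSet

/-- The forgetful functor `U : Exp → ωCat`, from the category
of strict ω-categories endowed with an expansion to the category of strict
ω-categories, admits a left adjoint. -/
theorem statement2 : (forgetExp.{u}).IsRightAdjoint :=
  isRightAdjoint_of_preservesLimits_of_solutionSetCondition _ solutionSetCondition_forgetExp

end Orientals

end
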